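/- For t ≥ 4, every graph with no K_t minor is (t−1)-colourable with defect t−2 and is (2t−2)-colourable with clustering ⌈(t−2)/2⌉. -/

import Mathlib

open SimpleGraph

variable {V α : Type*}

/-- The monochromatic subgraph of `G` under the colouring `f`:
edges of `G` whose endpoints get the same colour. -/
def monoSubgraph (G : SimpleGraph V) (f : V → α) : SimpleGraph V where
  Adj u v := G.Adj u v ∧ f u = f v
  symm := ⟨fun _ _ h => ⟨h.1.symm, h.2.symm⟩⟩
  loopless := ⟨fun v h => G.loopless.irrefl v h.1⟩

/-- The colouring `f` has defect `d`: every vertex has at most `d`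
neighbours of its own colour. -/
def HasDefect (G : SimpleGraph V) (f : V → α) (d : ℕ) : Prop :=
  ∀ v, {u | G.Adj v u ∧ f u = f v}.ncard ≤ d

/-- The colouring `f` has clustering `c`: every monochromatic connected
component has at most `c` vertices. -/
def HasClustering (G : SimpleGraph V) (f : V → α) (c : ℕ) : Prop :=
  ∀ v, {u | (monoSubgraph G f).Reachable v u}.ncard ≤ c
/-- `H` is a minor of `G`: there is a family of non-empty, connected, pairwise
disjoint branch sets in `G`, one for each vertex of `H`, with an edge of `G`
between the branch sets of any two adjacent vertices of `H`. -/
def IsMinor {W V : Type*} (H : SimpleGraph W) (G : SimpleGraph V) : Prop :=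
  ∃ B : W → Set V,
    (∀ w, (B w).Nonempty) ∧
    (∀ w, (G.induce (B w)).Connected) ∧
    (Pairwise fun w w' => Disjoint (B w) (B w')) ∧
    (∀ w w', H.Adj w w' → ∃ u ∈ B w, ∃ v ∈ B w', G.Adj u v)


set_option linter.unusedSectionVars false
set_option linter.unusedVariables false
set_option maxHeartbeats 1000000
section VdHWProof
namespace VdHW
variable {V : Type*} [DecidableEq V] (G : SimpleGraph V)

/-- Reachability within a finite vertex set. -/
def RR (S : Finset V) (x y : V) : Prop :=
  Relation.ReflTransGen (fun a b => G.Adj a b ∧ a ∈ S ∧ b ∈ S) x y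

/-- A nonempty, connected (within itself) finite vertex set. -/
def Conn (S : Finset V) : Prop :=
  S.Nonempty ∧ ∀ x ∈ S, ∀ y ∈ S, RR G S x y

variable {G}

lemma RR.mono {S T : Finset V} (hST : S ⊆ T) {x y : V} (h : RR G S x y) : RR G T x y := by
  induction h with
  | refl => exact Relation.ReflTransGen.refl
  | tail _ hbc ih => exact ih.tail ⟨hbc.1, hST hbc.2.1, hST hbc.2.2⟩

lemma RR.symm {S : Finset V} {x y : V} (h : RR G S x y) : RR G S y x :=
  (@Relation.ReflTransGen.stdSymm _ _ ⟨fun _ _ hab => ⟨hab.1.symm, hab.2.2, hab.2.1⟩⟩).symm _ _ h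

lemma RR.trans {S : Finset V} {x y z : V} (h : RR G S x y) (h' : RR G S y z) : RR G S x z :=
  Relation.ReflTransGen.trans h h'

lemma RR.mem_right {S : Finset V} {x y : V} (hx : x ∈ S) (h : RR G S x y) : y ∈ S := by
  induction h with
  | refl => exact hx
  | tail _ hbc _ => exact hbc.2.2

lemma RR.single {S : Finset V} {x y : V} (h : G.Adj x y) (hx : x ∈ S) (hy : y ∈ S) :
    RR G S x y := Relation.ReflTransGen.single ⟨h, hx, hy⟩

open scoped Classical in
/-- The connected component of `x` inside `S`. -/
noncomputable def comp (S : Finset V) (x : V) : Finset V := S.filter (RR G S x)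

lemma mem_comp {S : Finset V} {x y : V} : y ∈ comp (G := G) S x ↔ y ∈ S ∧ RR G S x y := by
  simp [comp]

lemma comp_subset {S : Finset V} {x : V} : comp (G := G) S x ⊆ S := fun y hy =>
  (mem_comp.1 hy).1

lemma mem_comp_self {S : Finset V} {x : V} (hx : x ∈ S) : x ∈ comp (G := G) S x :=
  mem_comp.2 ⟨hx, Relation.ReflTransGen.refl⟩

/-- A component is closed under edges within `S`. -/
lemma comp_closed {S : Finset V} {x u v : V} (hu : u ∈ comp (G := G) S x)
    (hv : v ∈ S) (hadj : G.Adj u v) : v ∈ comp (G := G) S x := by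
  rw [mem_comp] at hu ⊢
  exact ⟨hv, hu.2.tail ⟨hadj, hu.1, hv⟩⟩

lemma RR_comp {S : Finset V} {x y : V} (hx : x ∈ S) (h : RR G S x y) :
    RR G (comp (G := G) S x) x y := by
  induction h with
  | refl => exact Relation.ReflTransGen.refl
  | @tail b c hxb hbc ih =>
      exact ih.tail ⟨hbc.1, mem_comp.2 ⟨hbc.2.1, hxb⟩,
        mem_comp.2 ⟨hbc.2.2, hxb.trans (Relation.ReflTransGen.single hbc)⟩⟩

lemma conn_comp {S : Finset V} {x : V} (hx : x ∈ S) : Conn G (comp (G := G) S x) := by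
  refine ⟨⟨x, mem_comp_self hx⟩, fun a ha b hb => ?_⟩
  have h1 := RR_comp hx (mem_comp.1 ha).2
  have h2 := RR_comp hx (mem_comp.1 hb).2
  exact h1.symm.trans h2

lemma comp_eq_of_mem {S : Finset V} {x y : V} (hy : y ∈ comp (G := G) S x) :
    comp (G := G) S y = comp (G := G) S x := by
  obtain ⟨hyS, hxy⟩ := mem_comp.1 hy
  ext z
  simp only [mem_comp]
  exact ⟨fun ⟨hz, h⟩ => ⟨hz, hxy.trans h⟩, fun ⟨hz, h⟩ => ⟨hz, hxy.symm.trans h⟩⟩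

/-- Glue two connected sets sharing a vertex. -/
lemma Conn.union {S T : Finset V} (hS : Conn G S) (hT : Conn G T) {w : V}
    (hwS : w ∈ S) (hwT : w ∈ T) : Conn G (S ∪ T) := by
  refine ⟨⟨w, Finset.mem_union_left _ hwS⟩, fun a ha b hb => ?_⟩
  have key : ∀ c ∈ S ∪ T, RR G (S ∪ T) c w := by
    intro c hc
    rcases Finset.mem_union.1 hc with h | h
    · exact (hS.2 c h w hwS).mono Finset.subset_union_left
    · exact (hT.2 c h w hwT).mono Finset.subset_union_right
  exact (key a ha).trans (key b hb).symm

/-- Glue two connected sets joined by an edge. -/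
lemma Conn.union_adj {S T : Finset V} (hS : Conn G S) (hT : Conn G T) {u v : V}
    (hu : u ∈ S) (hv : v ∈ T) (hadj : G.Adj u v) : Conn G (S ∪ T) := by
  refine ⟨⟨u, Finset.mem_union_left _ hu⟩, fun a ha b hb => ?_⟩
  have key : ∀ c ∈ S ∪ T, RR G (S ∪ T) c u := by
    intro c hc
    rcases Finset.mem_union.1 hc with h | h
    · exact (hS.2 c h u hu).mono Finset.subset_union_left
    · refine ((hT.2 c h v hv).mono Finset.subset_union_right).trans ?_
      exact RR.single hadj.symm (Finset.mem_union_right _ hv) (Finset.mem_union_left _ hu)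
  exact (key a ha).trans (key b hb).symm

lemma Conn.singleton (x : V) : Conn G {x} :=
  ⟨⟨x, Finset.mem_singleton_self x⟩, fun a ha b hb => by
    rw [Finset.mem_singleton] at ha hb; subst ha; subst hb; exact Relation.ReflTransGen.refl⟩

/-- From internal connectivity to mathlib's induced-subgraph connectivity. -/
lemma Conn.induce_connected {S : Finset V} (h : Conn G S) :
    (G.induce (↑S : Set V)).Connected := by
  obtain ⟨⟨x0, hx0⟩, hconn⟩ := h
  have : Nonempty (↑S : Set V) := ⟨⟨x0, by exact_mod_cast hx0⟩⟩
  rw [SimpleGraph.connected_iff]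
  refine ⟨fun a b => ?_, this⟩
  have hr : RR G S a.1 b.1 := hconn a.1 (by exact_mod_cast a.2) b.1 (by exact_mod_cast b.2)
  -- turn RR into Reachable in the induced graph
  have : ∀ (y : V) (hy : y ∈ S), RR G S a.1 y →
      (G.induce (↑S : Set V)).Reachable a ⟨y, by exact_mod_cast hy⟩ := by
    intro y hy hr
    induction hr with
    | refl => rfl
    | @tail b c hab hbc ih =>
        refine (ih hbc.2.1).trans ?_
        exact SimpleGraph.Adj.reachable (by exact hbc.1)
  have hb : b.1 ∈ S := by exact_mod_cast b.2
  simpa using this b.1 hb hr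

end VdHW

namespace VdHW
variable {V : Type*} [DecidableEq V] {G : SimpleGraph V}

/-- `t` pairwise disjoint, pairwise adjacent connected finsets give a `K_t` minor. -/
lemma isMinor_of_sets {t : ℕ} (B : Fin t → Finset V)
    (hconn : ∀ i, Conn G (B i))
    (hdisj : ∀ i j, i ≠ j → Disjoint (B i) (B j))
    (hadj : ∀ i j, i ≠ j → ∃ u ∈ B i, ∃ v ∈ B j, G.Adj u v) :
    IsMinor (completeGraph (Fin t)) G := by
  refine ⟨fun i => (↑(B i) : Set V), fun i => ?_, fun i => (hconn i).induce_connected,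
    fun i j hij => ?_, fun i j hij => ?_⟩
  · obtain ⟨x, hx⟩ := (hconn i).1
    exact ⟨x, by exact_mod_cast hx⟩
  · show Disjoint (↑(B i) : Set V) (↑(B j) : Set V)
    exact_mod_cast Finset.disjoint_coe.2 (hdisj i j hij)
  · obtain ⟨u, hu, v, hv, huv⟩ := hadj i j hij
    exact ⟨u, by exact_mod_cast hu, v, by exact_mod_cast hv, huv⟩

/-- `H` is a minimum-cardinality connected subset containing `A`. -/
structure MinSteiner (G : SimpleGraph V) (H A : Finset V) : Prop where
  subset : A ⊆ H
  conn : Conn G H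
  minimal : ∀ S : Finset V, A ⊆ S → S ⊆ H → Conn G S → H.card ≤ S.card

open scoped Classical in
/-- Existence of a minimum Steiner set inside a connected set `C`. -/
lemma exists_minSteiner {C A : Finset V} (hC : Conn G C) (hA : A ⊆ C) :
    ∃ H : Finset V, H ⊆ C ∧ MinSteiner G H A := by
  classical
  have hne : (C.powerset.filter (fun S => A ⊆ S ∧ Conn G S)).Nonempty :=
    ⟨C, by simp [Finset.mem_filter, Finset.mem_powerset, hA, hC]⟩
  obtain ⟨H, hH, hmin⟩ := Finset.exists_min_image _ Finset.card hne
  rw [Finset.mem_filter, Finset.mem_powerset] at hH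
  refine ⟨H, hH.1, ⟨hH.2.1, hH.2.2, fun S hAS hSH hS => hmin S ?_⟩⟩
  rw [Finset.mem_filter, Finset.mem_powerset]
  exact ⟨hSH.trans hH.1, hAS, hS⟩

variable {H A : Finset V}

/-- Rerouting: any vertex outside a component `D` of `H \ {w}` reaches `w` avoiding `D`. -/
lemma reach_avoid (hH : Conn G H) {w : V} (hw : w ∈ H) {y : V} :
    ∀ z ∈ H, z ∉ comp (G := G) (H.erase w) y → RR G (H \ comp (G := G) (H.erase w) y) z w := by
  intro z hz hzD
  have hpath : RR G H z w := hH.2 z hz w hw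
  clear hz
  induction hpath using Relation.ReflTransGen.head_induction_on with
  | refl => exact Relation.ReflTransGen.refl
  | @head a c hac hcw ih =>
      by_cases haw : a = w
      · subst haw; exact Relation.ReflTransGen.refl
      · have haH : a ∈ H := hac.2.1
        have hcH : c ∈ H := hac.2.2
        have hcD : c ∉ comp (G := G) (H.erase w) y := by
          intro hcDmem
          by_cases hcw' : c = w
          · subst hcw'; exact (Finset.notMem_erase c _) (comp_subset hcDmem)
          · exact hzD (comp_closed hcDmem (Finset.mem_erase.2 ⟨haw, haH⟩) hac.1.symm)
        refine Relation.ReflTransGen.head ⟨hac.1, ?_, ?_⟩ (ih hcD)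
        · exact Finset.mem_sdiff.2 ⟨haH, hzD⟩
        · exact Finset.mem_sdiff.2 ⟨hcH, hcD⟩

/-- The complement of a component (within `H`) is connected. -/
lemma conn_sdiff_comp (hH : Conn G H) {w : V} (hw : w ∈ H) (y : V) :
    Conn G (H \ comp (G := G) (H.erase w) y) := by
  have hwD : w ∉ comp (G := G) (H.erase w) y := fun h => (Finset.notMem_erase w _) (comp_subset h)
  have hwmem : w ∈ H \ comp (G := G) (H.erase w) y := Finset.mem_sdiff.2 ⟨hw, hwD⟩
  refine ⟨⟨w, hwmem⟩, fun a ha b hb => ?_⟩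
  have h1 := reach_avoid hH hw a (Finset.mem_sdiff.1 ha).1 (Finset.mem_sdiff.1 ha).2
  have h2 := reach_avoid hH hw b (Finset.mem_sdiff.1 hb).1 (Finset.mem_sdiff.1 hb).2
  exact h1.trans h2.symm

/-- Every component of `H \ {w}` meets `A` (for a minimum Steiner set). -/
lemma comp_meets_A (hMS : MinSteiner G H A) {w : V} (hw : w ∈ H) {y : V} (hy : y ∈ H.erase w) :
    ∃ a ∈ A, a ∈ comp (G := G) (H.erase w) y := by
  by_contra hcon
  push_neg at hcon
  have hAsub : A ⊆ H \ comp (G := G) (H.erase w) y := fun a ha =>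
    Finset.mem_sdiff.2 ⟨hMS.subset ha, hcon a ha⟩
  have hcard := hMS.minimal _ hAsub Finset.sdiff_subset (conn_sdiff_comp hMS.conn hw y)
  have hyD : y ∈ comp (G := G) (H.erase w) y := mem_comp_self hy
  have hlt : (H \ comp (G := G) (H.erase w) y).card < H.card := by
    apply Finset.card_lt_card
    refine ⟨Finset.sdiff_subset, fun hsub => ?_⟩
    exact (Finset.mem_sdiff.1 (hsub (Finset.mem_of_mem_erase hy))).2 hyD
  omega

/-- There is an edge from a component of `H \ {w}` to `w`. -/
lemma comp_adj_w (hH : Conn G H) {w : V} (hw : w ∈ H) {y : V} (hy : y ∈ H.erase w) :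
    ∃ u ∈ comp (G := G) (H.erase w) y, G.Adj u w := by
  have key : ∀ z, RR G H z w → z ∈ comp (G := G) (H.erase w) y →
      ∃ u ∈ comp (G := G) (H.erase w) y, G.Adj u w := by
    intro z hpath
    induction hpath using Relation.ReflTransGen.head_induction_on with
    | refl => exact fun h => absurd (comp_subset h) (Finset.notMem_erase w _)
    | @head a c hac hcw ih =>
        intro haD
        by_cases hcw' : c = w
        · exact ⟨a, haD, hcw' ▸ hac.1⟩
        · exact ih (comp_closed haD (Finset.mem_erase.2 ⟨hcw', hac.2.2⟩) hac.1)
  exact key y (hH.2 y (Finset.mem_of_mem_erase hy) w hw) (mem_comp_self hy)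
end VdHW

namespace VdHW
variable {V : Type*} [DecidableEq V] {G : SimpleGraph V} {H A : Finset V}

lemma conn_insert_comp (hH : Conn G H) {w : V} (hw : w ∈ H) {y : V} (hy : y ∈ H.erase w) :
    Conn G (insert w (comp (G := G) (H.erase w) y)) := by
  obtain ⟨u, hu, huw⟩ := comp_adj_w hH hw hy
  have := Conn.union_adj (conn_comp (G := G) hy) (Conn.singleton (G := G) w) hu
    (Finset.mem_singleton_self w) huw
  rwa [Finset.union_comm, ← Finset.insert_eq] at this

/-- Piece 1 of the cut decomposition is again a minimum Steiner set. -/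
lemma minSteiner_piece1 (hMS : MinSteiner G H A) {w : V} (hw : w ∈ H) {y : V}
    (hy : y ∈ H.erase w) :
    MinSteiner G (insert w (comp (G := G) (H.erase w) y)) (insert w (A ∩ comp (G := G) (H.erase w) y)) := by
  set D := comp (G := G) (H.erase w) y with hD
  have hDsub : D ⊆ H.erase w := comp_subset
  have hDsubH : D ⊆ H := hDsub.trans (Finset.erase_subset _ _)
  have hpieceH : insert w D ⊆ H := Finset.insert_subset hw hDsubH
  refine ⟨?_, conn_insert_comp hMS.conn hw hy, ?_⟩
  · exact Finset.insert_subset_insert _ (Finset.inter_subset_right)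
  · intro S hAS hSsub hS
    -- replacement set
    have hwS : w ∈ S := hAS (Finset.mem_insert_self _ _)
    set S' := S ∪ (H \ insert w D) with hS'
    have hS'H : S' ⊆ H := Finset.union_subset (hSsub.trans hpieceH) Finset.sdiff_subset
    have hHD_sub : H \ D ⊆ S' := by
      intro z hz
      rcases Finset.mem_sdiff.1 hz with ⟨hzH, hzD⟩
      by_cases hzw : z = w
      · exact Finset.mem_union_left _ (hzw ▸ hwS)
      · exact Finset.mem_union_right _ (Finset.mem_sdiff.2 ⟨hzH, by
          simp only [Finset.mem_insert, not_or]; exact ⟨hzw, hzD⟩⟩)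
    have hconnS' : Conn G S' := by
      refine ⟨⟨w, Finset.mem_union_left _ hwS⟩, fun a ha b hb => ?_⟩
      have key : ∀ c ∈ S', RR G S' c w := by
        intro c hc
        rcases Finset.mem_union.1 hc with h | h
        · exact (hS.2 c h w hwS).mono Finset.subset_union_left
        · rcases Finset.mem_sdiff.1 h with ⟨hcH, hcni⟩
          have hcD : c ∉ D := fun hcd => hcni (Finset.mem_insert_of_mem hcd)
          exact (reach_avoid hMS.conn hw c hcH hcD).mono hHD_sub
      exact (key a ha).trans (key b hb).symm
    have hAS' : A ⊆ S' := by
      intro a ha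
      by_cases haD : a ∈ D
      · exact Finset.mem_union_left _ (hAS (Finset.mem_insert_of_mem (Finset.mem_inter.2 ⟨ha, haD⟩)))
      · exact hHD_sub (Finset.mem_sdiff.2 ⟨hMS.subset ha, haD⟩)
    have h1 := hMS.minimal S' hAS' hS'H hconnS'
    have h2 : S'.card ≤ S.card + (H \ insert w D).card := Finset.card_union_le _ _
    have h3 : (H \ insert w D).card = H.card - (insert w D).card := Finset.card_sdiff_of_subset hpieceH
    have h4 : (insert w D).card ≤ H.card := Finset.card_le_card hpieceH
    omega

/-- Piece 2 of the cut decomposition is again a minimum Steiner set. -/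
lemma minSteiner_piece2 (hMS : MinSteiner G H A) {w : V} (hw : w ∈ H) {y : V}
    (hy : y ∈ H.erase w) :
    MinSteiner G (H \ comp (G := G) (H.erase w) y) (insert w (A \ comp (G := G) (H.erase w) y)) := by
  set D := comp (G := G) (H.erase w) y with hD
  have hDsub : D ⊆ H.erase w := comp_subset
  have hDsubH : D ⊆ H := hDsub.trans (Finset.erase_subset _ _)
  have hwD : w ∉ D := fun h => (Finset.notMem_erase w _) (hDsub h)
  refine ⟨?_, conn_sdiff_comp hMS.conn hw y, ?_⟩
  · refine Finset.insert_subset (Finset.mem_sdiff.2 ⟨hw, hwD⟩) ?_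
    exact fun a ha => Finset.mem_sdiff.2 ⟨hMS.subset (Finset.mem_sdiff.1 ha).1,
      (Finset.mem_sdiff.1 ha).2⟩
  · intro S hAS hSsub hS
    have hwS : w ∈ S := hAS (Finset.mem_insert_self _ _)
    obtain ⟨u, hu, huw⟩ := comp_adj_w hMS.conn hw hy
    have hconnS' : Conn G (S ∪ D) := Conn.union_adj hS (conn_comp (G := G) hy) hwS hu huw.symm
    have hAS' : A ⊆ S ∪ D := by
      intro a ha
      by_cases haD : a ∈ D
      · exact Finset.mem_union_right _ haD
      · exact Finset.mem_union_left _ (hAS (Finset.mem_insert_of_mem (Finset.mem_sdiff.2 ⟨ha, haD⟩)))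
    have hS'H : S ∪ D ⊆ H := Finset.union_subset (hSsub.trans Finset.sdiff_subset) hDsubH
    have h1 := hMS.minimal _ hAS' hS'H hconnS'
    have h2 : (S ∪ D).card ≤ S.card + D.card := Finset.card_union_le _ _
    have h3 : (H \ D).card = H.card - D.card := Finset.card_sdiff_of_subset hDsubH
    have h4 : D.card ≤ H.card := Finset.card_le_card hDsubH
    omega

open scoped Classical in
/-- **Lemma L**: in a minimum Steiner set for `A`, each vertex has at most `|A \ {v}|`
neighbours. -/
lemma degree_bound : ∀ n : ℕ, ∀ H A : Finset V, H.card ≤ n →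
    MinSteiner G H A → A.Nonempty → ∀ v ∈ H,
    (H.filter (fun u => G.Adj v u)).card ≤ (A.erase v).card := by
  intro n
  induction n with
  | zero =>
      intro H A hcard hMS hA v hv
      exact absurd (Finset.card_pos.2 ⟨v, hv⟩) (by omega)
  | succ n ih =>
      intro H A hcard hMS hA v hv
      by_cases hcut : ∃ w ∈ H, w ≠ v ∧ ∃ y ∈ H.erase w, ∃ z ∈ H.erase w,
          ¬ RR G (H.erase w) y z
      · obtain ⟨w, hwH, hwv, y, hy, z, hz, hyz⟩ := hcut
        have hvew : v ∈ H.erase w := Finset.mem_erase.2 ⟨fun h => hwv h.symm, hv⟩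
        set D := comp (G := G) (H.erase w) v with hDdef
        have hvD : v ∈ D := mem_comp_self hvew
        -- one of y, z is outside D
        have hout : ∃ c ∈ H.erase w, c ∉ D := by
          by_contra hcon
          push_neg at hcon
          have h1 := hcon y hy
          have h2 := hcon z hz
          exact hyz (((conn_comp (G := G) hvew).2 y h1 z h2).mono comp_subset)
        obtain ⟨z₀, hz₀, hz₀D⟩ := hout
        have hMS1 := minSteiner_piece1 hMS hwH hvew
        have hpiece_lt : (insert w D).card < H.card := by
          apply Finset.card_lt_card
          refine ⟨Finset.insert_subset hwH (comp_subset.trans (Finset.erase_subset _ _)), ?_⟩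
          intro hsub
          have := hsub (Finset.mem_of_mem_erase hz₀)
          rcases Finset.mem_insert.1 this with h | h
          · exact (Finset.mem_erase.1 hz₀).1 h
          · exact hz₀D h
        have hA1ne : (insert w (A ∩ D)).Nonempty := ⟨w, Finset.mem_insert_self _ _⟩
        have hvpiece : v ∈ insert w D := Finset.mem_insert_of_mem hvD
        have hdeg1 := ih (insert w D) (insert w (A ∩ D)) (by omega) hMS1 hA1ne v hvpiece
        -- neighbours of v in H are within the piece
        have hfeq : H.filter (fun u => G.Adj v u) = (insert w D).filter (fun u => G.Adj v u) := by
          apply Finset.Subset.antisymm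
          · intro u hu
            rcases Finset.mem_filter.1 hu with ⟨huH, hadj⟩
            refine Finset.mem_filter.2 ⟨?_, hadj⟩
            by_cases huw : u = w
            · exact huw ▸ Finset.mem_insert_self _ _
            · exact Finset.mem_insert_of_mem
                (comp_closed hvD (Finset.mem_erase.2 ⟨huw, huH⟩) hadj)
          · intro u hu
            rcases Finset.mem_filter.1 hu with ⟨huH, hadj⟩
            refine Finset.mem_filter.2 ⟨?_, hadj⟩
            rcases Finset.mem_insert.1 huH with h | h
            · exact h ▸ hwH
            · exact comp_subset.trans (Finset.erase_subset _ _) h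
        -- compare |A1 \ {v}| with |A \ {v}|
        have hcard_cmp : ((insert w (A ∩ D)).erase v).card ≤ (A.erase v).card := by
          have hwv' : w ∉ (A ∩ D).erase v := fun h =>
            (Finset.notMem_erase w _) (comp_subset (Finset.mem_inter.1 (Finset.mem_of_mem_erase h)).2)
          have herase : (insert w (A ∩ D)).erase v = insert w ((A ∩ D).erase v) := by
            rw [Finset.erase_insert_of_ne hwv]
          rw [herase, Finset.card_insert_of_notMem hwv']
          by_cases hwA : w ∈ A
          · have : insert w ((A ∩ D).erase v) ⊆ A.erase v := by
              refine Finset.insert_subset (Finset.mem_erase.2 ⟨hwv, hwA⟩) ?_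
              intro a ha
              exact Finset.mem_erase.2 ⟨(Finset.mem_erase.1 ha).1,
                (Finset.mem_inter.1 (Finset.mem_of_mem_erase ha)).1⟩
            have := Finset.card_le_card this
            rwa [Finset.card_insert_of_notMem hwv'] at this
          · -- use an A-vertex in another component
            obtain ⟨a₀, ha₀A, ha₀D'⟩ := comp_meets_A hMS hwH hz₀
            have ha₀D : a₀ ∉ D := by
              intro h
              have e1 := comp_eq_of_mem (G := G) ha₀D'
              have e2 := comp_eq_of_mem (G := G) h
              exact hz₀D (by
                have : comp (G := G) (H.erase w) z₀ = D := by rw [← e1, e2]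
                exact this ▸ mem_comp_self hz₀)
            have ha₀v : a₀ ≠ v := fun h => ha₀D (h ▸ hvD)
            have : insert a₀ ((A ∩ D).erase v) ⊆ A.erase v := by
              refine Finset.insert_subset (Finset.mem_erase.2 ⟨ha₀v, ha₀A⟩) ?_
              intro a ha
              exact Finset.mem_erase.2 ⟨(Finset.mem_erase.1 ha).1,
                (Finset.mem_inter.1 (Finset.mem_of_mem_erase ha)).1⟩
            have hcc := Finset.card_le_card this
            rwa [Finset.card_insert_of_notMem
              (fun h => ha₀D (Finset.mem_inter.1 (Finset.mem_of_mem_erase h)).2)] at hcc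
        calc (H.filter (fun u => G.Adj v u)).card
            = ((insert w D).filter (fun u => G.Adj v u)).card := by rw [hfeq]
          _ ≤ ((insert w (A ∩ D)).erase v).card := hdeg1
          _ ≤ (A.erase v).card := hcard_cmp
      · -- no cut vertex other than v : every vertex other than v is in A
        push_neg at hcut
        have hHsub : H.erase v ⊆ A := by
          intro u hu
          rcases Finset.mem_erase.1 hu with ⟨huv, huH⟩
          by_contra huA
          have hconn : Conn G (H.erase u) := by
            refine ⟨⟨v, Finset.mem_erase.2 ⟨fun h => huv h.symm, hv⟩⟩, ?_⟩
            exact hcut u huH huv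
          have hAsub : A ⊆ H.erase u := fun a ha =>
            Finset.mem_erase.2 ⟨fun h => huA (h ▸ ha), hMS.subset ha⟩
          have := hMS.minimal _ hAsub (Finset.erase_subset _ _) hconn
          have := Finset.card_erase_of_mem huH
          have := Finset.card_pos.2 ⟨u, huH⟩
          omega
        have : H.filter (fun u => G.Adj v u) ⊆ A.erase v := by
          intro u hu
          rcases Finset.mem_filter.1 hu with ⟨huH, hadj⟩
          have huv : u ≠ v := fun h => G.irrefl (h ▸ hadj)
          exact Finset.mem_erase.2 ⟨huv, hHsub (Finset.mem_erase.2 ⟨huv, huH⟩)⟩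
        exact Finset.card_le_card this
end VdHW

namespace VdHW
variable {V : Type*} [DecidableEq V] {G : SimpleGraph V}

/-- Reachability within `S` along edges whose endpoints share the same colour. -/
def MonoRR (G : SimpleGraph V) (g : V → Bool) (S : Finset V) (x y : V) : Prop :=
  Relation.ReflTransGen (fun a b => G.Adj a b ∧ a ∈ S ∧ b ∈ S ∧ g a = g b) x y

open scoped Classical in
/-- Monochromatic component of `x` in `S`. -/
noncomputable def mcomp (G : SimpleGraph V) (g : V → Bool) (S : Finset V) (x : V) : Finset V :=
  S.filter (MonoRR G g S x)

lemma mem_mcomp {g : V → Bool} {S : Finset V} {x y : V} :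
    y ∈ mcomp G g S x ↔ y ∈ S ∧ MonoRR G g S x y := by
  classical simp [mcomp]

lemma MonoRR.symm {g : V → Bool} {S : Finset V} {x y : V} (h : MonoRR G g S x y) :
    MonoRR G g S y x :=
  (@Relation.ReflTransGen.stdSymm _ _
    ⟨fun _ _ hab => ⟨hab.1.symm, hab.2.2.1, hab.2.1, hab.2.2.2.symm⟩⟩).symm _ _ h

lemma MonoRR.trans {g : V → Bool} {S : Finset V} {x y z : V} (h : MonoRR G g S x y)
    (h' : MonoRR G g S y z) : MonoRR G g S x z := Relation.ReflTransGen.trans h h'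

lemma mem_mcomp_self {g : V → Bool} {S : Finset V} {x : V} (hx : x ∈ S) :
    x ∈ mcomp G g S x := mem_mcomp.2 ⟨hx, Relation.ReflTransGen.refl⟩

lemma mcomp_subset {g : V → Bool} {S : Finset V} {x : V} : mcomp G g S x ⊆ S :=
  fun y hy => (mem_mcomp.1 hy).1

lemma mcomp_eq_of_mem {g : V → Bool} {S : Finset V} {x y : V} (hy : y ∈ mcomp G g S x) :
    mcomp G g S y = mcomp G g S x := by
  obtain ⟨hyS, hxy⟩ := mem_mcomp.1 hy
  ext z
  simp only [mem_mcomp]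
  exact ⟨fun ⟨hz, h⟩ => ⟨hz, hxy.trans h⟩, fun ⟨hz, h⟩ => ⟨hz, hxy.symm.trans h⟩⟩

lemma MonoRR.g_eq {g : V → Bool} {S : Finset V} {x y : V} (h : MonoRR G g S x y) :
    g y = g x := by
  induction h with
  | refl => rfl
  | tail _ hbc ih => rw [← hbc.2.2.2, ih]

lemma g_eq_of_mem_mcomp {g : V → Bool} {S : Finset V} {x y : V} (hy : y ∈ mcomp G g S x) :
    g y = g x := (mem_mcomp.1 hy).2.g_eq

lemma MonoRR.congr {g g' : V → Bool} {S : Finset V} (hagree : ∀ v ∈ S, g v = g' v)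
    {x y : V} (h : MonoRR G g S x y) : MonoRR G g' S x y := by
  induction h with
  | refl => exact Relation.ReflTransGen.refl
  | tail _ hbc ih =>
      exact ih.tail ⟨hbc.1, hbc.2.1, hbc.2.2.1, by
        rw [← hagree _ hbc.2.1, ← hagree _ hbc.2.2.1]; exact hbc.2.2.2⟩

/-- Components only depend on colour values inside `S`. -/
lemma mcomp_congr {g g' : V → Bool} {S : Finset V} (hagree : ∀ v ∈ S, g v = g' v) (x : V) :
    mcomp G g S x = mcomp G g' S x := by
  ext z
  simp only [mem_mcomp]
  exact ⟨fun ⟨hz, h⟩ => ⟨hz, h.congr hagree⟩,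
    fun ⟨hz, h⟩ => ⟨hz, h.congr (fun v hv => (hagree v hv).symm)⟩⟩

/-- Flipping the two colours does not change components. -/
lemma mcomp_flip (g : V → Bool) (S : Finset V) (x : V) :
    mcomp G (fun v => !(g v)) S x = mcomp G g S x := by
  ext z
  simp only [mem_mcomp]
  constructor <;> (rintro ⟨hz, h⟩; refine ⟨hz, ?_⟩)
  · refine Relation.ReflTransGen.mono ?_ _ _ h
    exact fun a b hab => ⟨hab.1, hab.2.1, hab.2.2.1, by have := hab.2.2.2; simpa using this⟩
  · refine Relation.ReflTransGen.mono ?_ _ _ h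
    exact fun a b hab => ⟨hab.1, hab.2.1, hab.2.2.1, by simp [hab.2.2.2]⟩

open scoped Classical in
/-- A mono component is contained in the colour class. -/
lemma mcomp_subset_class {g : V → Bool} {S : Finset V} {x : V} :
    mcomp G g S x ⊆ S.filter (fun u => g u = g x) := fun y hy =>
  Finset.mem_filter.2 ⟨(mem_mcomp.1 hy).1, g_eq_of_mem_mcomp hy⟩

end VdHW

namespace VdHW
variable {V : Type*} [DecidableEq V] {G : SimpleGraph V}

lemma MonoRR.mono {g : V → Bool} {S T : Finset V} (hST : S ⊆ T) {x y : V}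
    (h : MonoRR G g S x y) : MonoRR G g T x y := by
  refine Relation.ReflTransGen.mono ?_ _ _ h
  exact fun a b hab => ⟨hab.1, hST hab.2.1, hST hab.2.2.1, hab.2.2.2⟩

section Confine
variable {H : Finset V} {w b : V} {g : V → Bool}

/-- K3a: a mono component avoiding `w`, starting in `D`, stays in `insert w D`. -/
lemma mcomp_confine1 (hw : w ∈ H) (hb : b ∈ H.erase w) {v : V}
    (hv : v ∈ comp (G := G) (H.erase w) b)
    (hwM : w ∉ mcomp G g H v) :
    mcomp G g H v ⊆ mcomp G g (insert w (comp (G := G) (H.erase w) b)) v := by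
  set D := comp (G := G) (H.erase w) b with hD
  intro u hu
  obtain ⟨huH, hchain⟩ := mem_mcomp.1 hu
  clear huH hu
  induction hchain with
  | refl => exact mem_mcomp_self (Finset.mem_insert_of_mem hv)
  | @tail p u hvp hpu ih =>
      have hpmem : p ∈ mcomp G g (insert w D) v := ih
      have hpD : p ∈ D := by
        rcases Finset.mem_insert.1 (mcomp_subset hpmem) with h | h
        · exfalso
          apply hwM
          exact mem_mcomp.2 ⟨hw, h ▸ ((mem_mcomp.1 hpmem).2.mono (Finset.insert_subset hw
              (comp_subset.trans (Finset.erase_subset _ _))))⟩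
        · exact h
      have huw : u ≠ w := by
        intro h
        exact hwM (mem_mcomp.2 ⟨hw, h ▸ hvp.tail hpu⟩)
      have huD : u ∈ D := comp_closed hpD (Finset.mem_erase.2 ⟨huw, hpu.2.2.1⟩) hpu.1
      exact mem_mcomp.2 ⟨Finset.mem_insert_of_mem huD,
        (mem_mcomp.1 hpmem).2.tail ⟨hpu.1, mcomp_subset hpmem, Finset.mem_insert_of_mem huD,
          hpu.2.2.2⟩⟩

/-- K3b: a mono component avoiding `w`, starting outside `D`, stays in `H \ D`. -/
lemma mcomp_confine2 (hw : w ∈ H) (hb : b ∈ H.erase w) {v : V} (hvH : v ∈ H)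
    (hv : v ∉ comp (G := G) (H.erase w) b)
    (hwM : w ∉ mcomp G g H v) :
    mcomp G g H v ⊆ mcomp G g (H \ comp (G := G) (H.erase w) b) v := by
  set D := comp (G := G) (H.erase w) b with hD
  intro u hu
  obtain ⟨huH, hchain⟩ := mem_mcomp.1 hu
  clear huH hu
  induction hchain with
  | refl => exact mem_mcomp_self (Finset.mem_sdiff.2 ⟨hvH, hv⟩)
  | @tail p u hvp hpu ih =>
      have hpmem : p ∈ mcomp G g (H \ D) v := ih
      have hpP : p ∈ H \ D := mcomp_subset hpmem
      have hpw : p ≠ w := by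
        intro h
        exact hwM (mem_mcomp.2 ⟨hw, h ▸ hvp⟩)
      have huw : u ≠ w := by
        intro h
        exact hwM (mem_mcomp.2 ⟨hw, h ▸ hvp.tail hpu⟩)
      have huD : u ∉ D := by
        intro huD
        exact (Finset.mem_sdiff.1 hpP).2
          (comp_closed huD (Finset.mem_erase.2 ⟨hpw, hpu.2.1⟩) hpu.1.symm)
      have huP : u ∈ H \ D := Finset.mem_sdiff.2 ⟨hpu.2.2.1, huD⟩
      exact mem_mcomp.2 ⟨huP, (mem_mcomp.1 hpmem).2.tail ⟨hpu.1, hpP, huP, hpu.2.2.2⟩⟩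

/-- K4: the mono component of `w` splits into the two pieces' components. -/
lemma mcomp_w_subset_union (hw : w ∈ H) (hb : b ∈ H.erase w) :
    mcomp G g H w ⊆ mcomp G g (insert w (comp (G := G) (H.erase w) b)) w ∪
      mcomp G g (H \ comp (G := G) (H.erase w) b) w := by
  set D := comp (G := G) (H.erase w) b with hD
  have hwD : w ∉ D := fun h => (Finset.notMem_erase w _) (comp_subset h)
  have hwP1 : w ∈ insert w D := Finset.mem_insert_self _ _
  have hwP2 : w ∈ H \ D := Finset.mem_sdiff.2 ⟨hw, hwD⟩
  intro u hu
  obtain ⟨huH, hchain⟩ := mem_mcomp.1 hu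
  clear huH hu
  induction hchain with
  | refl => exact Finset.mem_union_left _ (mem_mcomp_self hwP1)
  | @tail p u hvp hpu ih =>
      have hpH : p ∈ H := hpu.2.1
      have huH : u ∈ H := hpu.2.2.1
      by_cases huD : u ∈ D
      · -- step lands in D : previous vertex is in insert w D
        have hpP1 : p ∈ insert w D := by
          by_cases hpw : p = w
          · exact hpw ▸ hwP1
          · exact Finset.mem_insert_of_mem
              (comp_closed huD (Finset.mem_erase.2 ⟨hpw, hpH⟩) hpu.1.symm)
        have hpC1 : p ∈ mcomp G g (insert w D) w := by
          rcases Finset.mem_union.1 ih with h | h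
          · exact h
          · -- p is in both pieces only if p = w
            have := mcomp_subset h
            have hpw : p = w := by
              by_contra hpw
              rcases Finset.mem_insert.1 hpP1 with h' | h'
              · exact hpw h'
              · exact (Finset.mem_sdiff.1 this).2 h'
            rw [hpw]; exact mem_mcomp_self hwP1
        refine Finset.mem_union_left _ (mem_mcomp.2 ⟨Finset.mem_insert_of_mem huD,
          (mem_mcomp.1 hpC1).2.tail ⟨hpu.1, mcomp_subset hpC1,
            Finset.mem_insert_of_mem huD, hpu.2.2.2⟩⟩)
      · -- step lands outside D
        have huP2 : u ∈ H \ D := Finset.mem_sdiff.2 ⟨huH, huD⟩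
        by_cases hpD : p ∈ D
        · -- then u must be w
          have huw : u = w := by
            by_contra huw
            exact huD (comp_closed hpD (Finset.mem_erase.2 ⟨huw, huH⟩) hpu.1)
          subst huw
          exact Finset.mem_union_left _ (mem_mcomp_self hwP1)
        · have hpP2 : p ∈ H \ D := Finset.mem_sdiff.2 ⟨hpH, hpD⟩
          have hpC2 : p ∈ mcomp G g (H \ D) w := by
            rcases Finset.mem_union.1 ih with h | h
            · have := mcomp_subset h
              have hpw : p = w := by
                rcases Finset.mem_insert.1 this with h' | h'
                · exact h'
                · exact absurd h' hpD
              rw [hpw]; exact mem_mcomp_self hwP2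
            · exact h
          exact Finset.mem_union_right _ (mem_mcomp.2 ⟨huP2,
            (mem_mcomp.1 hpC2).2.tail ⟨hpu.1, mcomp_subset hpC2, huP2, hpu.2.2.2⟩⟩)
end Confine
end VdHW

namespace VdHW
variable {V : Type*} [DecidableEq V] {G : SimpleGraph V}

open scoped Classical in
/-- **Lemma CD**: a minimum Steiner set for `A` has a 2-colouring whose monochromatic
components have at most `⌈|A|/2⌉` vertices, with the component of a designated vertex
having at most `max 1 ⌊|A|/2⌋` vertices. -/
lemma split_bound : ∀ n : ℕ, ∀ H A : Finset V, H.card ≤ n →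
    MinSteiner G H A → A.Nonempty → ∀ d ∈ H,
    ∃ g : V → Bool,
      (∀ v ∈ H, (mcomp G g H v).card ≤ (A.card + 1) / 2) ∧
      (mcomp G g H d).card ≤ max 1 (A.card / 2) := by
  intro n
  induction n with
  | zero => intro H A hcard hMS hA d hd; exact absurd (Finset.card_pos.2 ⟨d, hd⟩) (by omega)
  | succ n ih =>
    intro H A hcard hMS hA d hd
    by_cases hcut : ∃ w ∈ H, ∃ y ∈ H.erase w, ∃ z ∈ H.erase w, ¬ RR G (H.erase w) y z
    · obtain ⟨w, hwH, y, hy, z, hz, hyz⟩ := hcut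
      obtain ⟨b, hbew, hdD⟩ : ∃ b, b ∈ H.erase w ∧
          (d = w ∨ d ∈ comp (G := G) (H.erase w) b) := by
        by_cases hdw : d = w
        · exact ⟨y, hy, Or.inl hdw⟩
        · exact ⟨d, Finset.mem_erase.2 ⟨hdw, hd⟩,
            Or.inr (mem_comp_self (Finset.mem_erase.2 ⟨hdw, hd⟩))⟩
      set D := comp (G := G) (H.erase w) b with hDdef
      have hout : ∃ c ∈ H.erase w, c ∉ D := by
        by_contra hcon; push_neg at hcon
        exact hyz (((conn_comp (G := G) hbew).2 y (hcon y hy) z (hcon z hz)).mono comp_subset)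
      obtain ⟨z₀, hz₀, hz₀D⟩ := hout
      have hwD : w ∉ D := fun h => (Finset.notMem_erase w _) (comp_subset h)
      have hDH : D ⊆ H := comp_subset.trans (Finset.erase_subset _ _)
      have hbD : b ∈ D := mem_comp_self hbew
      have hMS1 := minSteiner_piece1 hMS hwH hbew
      have hMS2 := minSteiner_piece2 hMS hwH hbew
      have hP1H : insert w D ⊆ H := Finset.insert_subset hwH hDH
      have hP1lt : (insert w D).card < H.card := by
        apply Finset.card_lt_card
        refine ⟨hP1H, fun hsub => ?_⟩
        have := hsub (Finset.mem_of_mem_erase hz₀)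
        rcases Finset.mem_insert.1 this with h | h
        · exact (Finset.mem_erase.1 hz₀).1 h
        · exact hz₀D h
      have hP2lt : (H \ D).card < H.card := by
        have h1 : D.card ≤ H.card := Finset.card_le_card hDH
        have h2 : (H \ D).card = H.card - D.card := Finset.card_sdiff_of_subset hDH
        have h3 : 0 < D.card := Finset.card_pos.2 ⟨b, hbD⟩
        omega
      -- cardinal bookkeeping
      have hkA : A.card = (A ∩ D).card + (A \ D).card :=
        (Finset.card_inter_add_card_sdiff A D).symm
      have hc1 : 1 ≤ (A ∩ D).card := by
        obtain ⟨a, haA, haD⟩ := comp_meets_A hMS hwH hbew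
        exact Finset.card_pos.2 ⟨a, Finset.mem_inter.2 ⟨haA, haD⟩⟩
      obtain ⟨a₀, ha₀A, ha₀D'⟩ := comp_meets_A hMS hwH hz₀
      have ha₀D : a₀ ∉ D := by
        intro h
        have e1 := comp_eq_of_mem (G := G) ha₀D'
        have e2 := comp_eq_of_mem (G := G) h
        refine hz₀D ?_
        have : comp (G := G) (H.erase w) z₀ = D := by rw [← e1, e2]
        exact this ▸ mem_comp_self hz₀
      have ha₀w : a₀ ≠ w := fun h => (Finset.notMem_erase w _) (comp_subset (h ▸ ha₀D'))
      have hc2 : 1 ≤ (A \ D).card := Finset.card_pos.2 ⟨a₀, Finset.mem_sdiff.2 ⟨ha₀A, ha₀D⟩⟩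
      have hA1card : (insert w (A ∩ D)).card = (A ∩ D).card + 1 :=
        Finset.card_insert_of_notMem (fun h => hwD (Finset.mem_inter.1 h).2)
      have hk2ge : 2 ≤ (insert w (A \ D)).card := by
        have hsub : ({w, a₀} : Finset V) ⊆ insert w (A \ D) := by
          intro x hx
          rcases Finset.mem_insert.1 hx with h | h
          · exact h ▸ Finset.mem_insert_self _ _
          · rw [Finset.mem_singleton] at h
            exact h ▸ Finset.mem_insert_of_mem (Finset.mem_sdiff.2 ⟨ha₀A, ha₀D⟩)
        have := Finset.card_le_card hsub
        rwa [Finset.card_pair (fun h => ha₀w h.symm)] at this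
      have hk2le : (insert w (A \ D)).card ≤ (A \ D).card + 1 := Finset.card_insert_le _ _
      -- recursive calls
      have hdP1 : d ∈ insert w D := by
        rcases hdD with h | h
        · exact h ▸ Finset.mem_insert_self _ _
        · exact Finset.mem_insert_of_mem h
      obtain ⟨g1, hg1, hg1d⟩ := ih (insert w D) (insert w (A ∩ D)) (by omega) hMS1
        ⟨w, Finset.mem_insert_self _ _⟩ d hdP1
      have hwP2 : w ∈ H \ D := Finset.mem_sdiff.2 ⟨hwH, hwD⟩
      obtain ⟨g2, hg2, hg2w⟩ := ih (H \ D) (insert w (A \ D)) (by omega) hMS2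
        ⟨w, Finset.mem_insert_self _ _⟩ w hwP2
      -- align colours at w
      set g2' : V → Bool := if g1 w = g2 w then g2 else (fun v => !(g2 v)) with hg2'def
      have hg2'w : g2' w = g1 w := by
        rw [hg2'def]
        split
        · exact (by assumption : g1 w = g2 w).symm
        · rename_i hne
          cases hb1 : g1 w <;> cases hb2 : g2 w <;> simp_all
      have hg2'comp : ∀ x, mcomp G g2' (H \ D) x = mcomp G g2 (H \ D) x := by
        intro x
        rw [hg2'def]
        split
        · rfl
        · exact mcomp_flip g2 _ x
      -- glued colouring
      set g : V → Bool := fun v => if v ∈ D then g1 v else g2' v with hgdef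
      have hagree1 : ∀ v ∈ insert w D, g v = g1 v := by
        intro v hv
        by_cases hvD : v ∈ D
        · rw [hgdef]; simp [hvD]
        · have hvw : v = w := by
            rcases Finset.mem_insert.1 hv with h | h
            · exact h
            · exact absurd h hvD
          rw [hgdef]; simp [hvD, hvw, hg2'w, hwD]
      have hagree2 : ∀ v ∈ H \ D, g v = g2' v := by
        intro v hv
        rw [hgdef]; simp [(Finset.mem_sdiff.1 hv).2]
      -- transfer piece bounds
      have hC1 : ∀ v ∈ insert w D,
          (mcomp G g (insert w D) v).card ≤ ((A ∩ D).card + 1 + 1) / 2 := by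
        intro v hv
        rw [mcomp_congr hagree1]
        have := hg1 v hv
        rwa [hA1card] at this
      have hC1d : (mcomp G g (insert w D) d).card ≤ max 1 (((A ∩ D).card + 1) / 2) := by
        rw [mcomp_congr hagree1]
        rwa [hA1card] at hg1d
      have hC2 : ∀ v ∈ H \ D,
          (mcomp G g (H \ D) v).card ≤ ((insert w (A \ D)).card + 1) / 2 := by
        intro v hv
        rw [mcomp_congr hagree2, hg2'comp]
        exact hg2 v hv
      have hC2w : (mcomp G g (H \ D) w).card ≤ (insert w (A \ D)).card / 2 := by
        rw [mcomp_congr hagree2, hg2'comp]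
        refine hg2w.trans (le_of_eq ?_)
        exact max_eq_right (by omega)
      -- union bound for components containing w
      have hwun : ∀ x ∈ H, w ∈ mcomp G g H x → (mcomp G g H x).card ≤
          (mcomp G g (insert w D) w).card + (mcomp G g (H \ D) w).card - 1 := by
        intro x hx hwM
        have hsub := mcomp_w_subset_union (G := G) (g := g) hwH hbew
        have h1 : (mcomp G g H x).card ≤
            ((mcomp G g (insert w D) w) ∪ (mcomp G g (H \ D) w)).card :=
          Finset.card_le_card ((mcomp_eq_of_mem hwM) ▸ hsub)
        have h2 := Finset.card_union_add_card_inter (mcomp G g (insert w D) w)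
          (mcomp G g (H \ D) w)
        have h3 : 1 ≤ ((mcomp G g (insert w D) w) ∩ (mcomp G g (H \ D) w)).card :=
          Finset.card_pos.2 ⟨w, Finset.mem_inter.2
            ⟨mem_mcomp_self (Finset.mem_insert_self _ _), mem_mcomp_self hwP2⟩⟩
        omega
      refine ⟨g, fun v hv => ?_, ?_⟩
      · by_cases hwM : w ∈ mcomp G g H v
        · have hb1 := hC1 w (Finset.mem_insert_self _ _)
          have hb2 := hC2w
          have hb3 := hwun v hv hwM
          omega
        · by_cases hvD : v ∈ D
          · have hsub := mcomp_confine1 (G := G) (g := g) hwH hbew hvD hwM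
            have h1 := (Finset.card_le_card hsub).trans (hC1 v (Finset.mem_insert_of_mem hvD))
            omega
          · have hsub := mcomp_confine2 (G := G) (g := g) hwH hbew hv hvD hwM
            have h1 := (Finset.card_le_card hsub).trans (hC2 v (Finset.mem_sdiff.2 ⟨hv, hvD⟩))
            omega
      · by_cases hwM : w ∈ mcomp G g H d
        · have hC1w' : (mcomp G g (insert w D) w).card ≤ max 1 (((A ∩ D).card + 1) / 2) := by
            rcases hdD with hdw | hdDm
            · rw [hdw] at hC1d; exact hC1d
            · have hdM : d ∈ mcomp G g H w := by
                rw [mcomp_eq_of_mem hwM]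
                exact mem_mcomp_self hd
              have hdun := mcomp_w_subset_union (G := G) (g := g) hwH hbew hdM
              rcases Finset.mem_union.1 hdun with h | h
              · rw [← mcomp_eq_of_mem h]
                exact hC1d
              · exact absurd hdDm (Finset.mem_sdiff.1 (mcomp_subset h)).2
          have hmax1 : max 1 (((A ∩ D).card + 1) / 2) = ((A ∩ D).card + 1) / 2 :=
            max_eq_right (by omega)
          rw [hmax1] at hC1w'
          have hb3 := hwun d hd hwM
          have hgoal : (mcomp G g H d).card ≤ A.card / 2 := by
            have := hC2w
            omega
          exact hgoal.trans (le_max_right _ _)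
        · rcases hdD with hdw | hdDm
          · exfalso; apply hwM; rw [hdw]; exact mem_mcomp_self hwH
          · have hsub := mcomp_confine1 (G := G) (g := g) hwH hbew hdDm hwM
            have h1 := (Finset.card_le_card hsub).trans hC1d
            refine h1.trans (max_le_max (le_refl 1) ?_)
            exact Nat.div_le_div_right (by omega)
    · -- no cut vertex : `A = H`, split by cardinality
      push_neg at hcut
      have hAH : A = H := by
        refine Finset.Subset.antisymm hMS.subset (fun u huH => ?_)
        by_contra huA
        obtain ⟨a, haA⟩ := hA
        have hau : a ≠ u := fun h => huA (h ▸ haA)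
        have hconn : Conn G (H.erase u) :=
          ⟨⟨a, Finset.mem_erase.2 ⟨hau, hMS.subset haA⟩⟩, hcut u huH⟩
        have hAsub : A ⊆ H.erase u := fun x hx =>
          Finset.mem_erase.2 ⟨fun h => huA (h ▸ hx), hMS.subset hx⟩
        have h1 := hMS.minimal _ hAsub (Finset.erase_subset _ _) hconn
        have h2 := Finset.card_erase_of_mem huH
        have h3 := Finset.card_pos.2 ⟨u, huH⟩
        omega
      have hkH : H.card = A.card := by rw [hAH]
      have hk1 : 1 ≤ A.card := Finset.card_pos.2 hA
      have ht₀le : max 1 (A.card / 2) ≤ H.card := by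
        rw [hkH]; exact max_le (by omega) (Nat.div_le_self _ _)
      obtain ⟨T', hT'sub, hT'card⟩ := Finset.exists_subset_card_eq
        (show max 1 (A.card / 2) - 1 ≤ (H.erase d).card by
          rw [Finset.card_erase_of_mem hd]; omega)
      have hdT' : d ∉ T' := fun h => (Finset.notMem_erase d _) (hT'sub h)
      have hTcard : (insert d T').card = max 1 (A.card / 2) := by
        rw [Finset.card_insert_of_notMem hdT', hT'card]
        have : 1 ≤ max 1 (A.card / 2) := le_max_left _ _
        omega
      have hTH : insert d T' ⊆ H :=
        Finset.insert_subset hd (hT'sub.trans (Finset.erase_subset _ _))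
      classical
      refine ⟨fun v => decide (v ∈ insert d T'), fun v hv => ?_, ?_⟩
      · have hsub := mcomp_subset_class (G := G) (g := fun v => decide (v ∈ insert d T'))
          (S := H) (x := v)
        by_cases hvT : v ∈ insert d T'
        · have hcl : H.filter (fun u => decide (u ∈ insert d T') = decide (v ∈ insert d T'))
              ⊆ insert d T' := by
            intro u hu
            have h := (Finset.mem_filter.1 hu).2
            rw [decide_eq_decide] at h
            exact h.2 hvT
          have h1 := Finset.card_le_card (hsub.trans hcl)
          rw [hTcard] at h1
          refine h1.trans ?_
          exact max_le (by omega) (by omega)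
        · have hcl : H.filter (fun u => decide (u ∈ insert d T') = decide (v ∈ insert d T'))
              ⊆ H \ insert d T' := by
            intro u hu
            rcases Finset.mem_filter.1 hu with ⟨huH, h⟩
            rw [decide_eq_decide] at h
            exact Finset.mem_sdiff.2 ⟨huH, fun hT => hvT (h.1 hT)⟩
          have h1 := Finset.card_le_card (hsub.trans hcl)
          have h2 : (H \ insert d T').card = H.card - (insert d T').card :=
            Finset.card_sdiff_of_subset hTH
          rw [hTcard] at h2
          rcases le_total 1 (A.card / 2) with hc | hc
          · rw [max_eq_right hc] at h2
            omega
          · rw [max_eq_left hc] at h2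
            omega
      · have hsub := mcomp_subset_class (G := G) (g := fun v => decide (v ∈ insert d T'))
          (S := H) (x := d)
        have hcl : H.filter (fun u => decide (u ∈ insert d T') = decide (d ∈ insert d T'))
            ⊆ insert d T' := by
          intro u hu
          have h := (Finset.mem_filter.1 hu).2
          rw [decide_eq_decide] at h
          exact h.2 (Finset.mem_insert_self _ _)
        have h1 := Finset.card_le_card (hsub.trans hcl)
        rw [hTcard] at h1
        exact h1
end VdHW

namespace VdHW
variable {V : Type*} [DecidableEq V] {G : SimpleGraph V}

/-- There is an edge of `G` between the two sets. -/
def Adj2 (G : SimpleGraph V) (p q : Finset V) : Prop := ∃ u ∈ p, ∃ v ∈ q, G.Adj u v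

lemma Adj2.symm {p q : Finset V} (h : Adj2 G p q) : Adj2 G q p := by
  obtain ⟨u, hu, v, hv, huv⟩ := h
  exact ⟨v, hv, u, hu, huv.symm⟩

lemma Adj2.mono_right {p q q' : Finset V} (h : Adj2 G p q) (hq : q ⊆ q') : Adj2 G p q' := by
  obtain ⟨u, hu, v, hv, huv⟩ := h
  exact ⟨u, hu, v, hq hv, huv⟩

/-- If `t-1` pairwise adjacent parts are all adjacent to a connected set `C` disjoint
from them, we get a `K_t` minor; so there are at most `t-2` of them. -/
lemma card_adj_parts_le {t : ℕ} (hminor : ¬ IsMinor (completeGraph (Fin t)) G) (ht : 4 ≤ t)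
    {parts : Finset (Finset V)} {C : Finset V} (hC : Conn G C)
    (hpc : ∀ p ∈ parts, Conn G p)
    (hdisjparts : ∀ p ∈ parts, ∀ q ∈ parts, ∀ v : V, v ∈ p → v ∈ q → p = q)
    (hdisjC : ∀ p ∈ parts, ∀ v ∈ p, v ∉ C)
    (hadjC : ∀ p ∈ parts, Adj2 G p C)
    (hpair : ∀ p ∈ parts, ∀ q ∈ parts, p ≠ q → Adj2 G p q) :
    parts.card ≤ t - 2 := by
  by_contra hcon
  obtain ⟨Q', hQ'sub, hQ'card⟩ := Finset.exists_subset_card_eq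
    (show t - 1 ≤ parts.card by omega)
  have hQ'equiv := Q'.equivFin
  set ε : Fin (t - 1) → Finset V :=
    fun i => (hQ'equiv.symm (Fin.cast hQ'card.symm i) : { x // x ∈ Q' }).1 with hε
  have hεmem : ∀ i, ε i ∈ parts := fun i => hQ'sub (hQ'equiv.symm (Fin.cast hQ'card.symm i)).2
  have hεinj : Function.Injective ε := by
    intro i j hij
    have := Subtype.ext hij
    have h2 := hQ'equiv.symm.injective this
    have h3 := congrArg Fin.val h2
    exact Fin.ext (by simpa using h3)
  set B : Fin t → Finset V := fun i => if h : (i : ℕ) < t - 1 then ε ⟨i, h⟩ else C with hB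
  apply hminor
  apply isMinor_of_sets B
  · intro i
    rw [hB]
    dsimp only
    split
    · exact hpc _ (hεmem _)
    · exact hC
  · intro i j hij
    rw [hB]
    dsimp only
    rw [Finset.disjoint_left]
    split <;> split
    · rename_i hi hj
      intro v hv hv'
      have hne : ε ⟨i, hi⟩ ≠ ε ⟨j, hj⟩ := by
        intro h
        exact hij (Fin.ext (by simpa using congrArg Fin.val (hεinj h)))
      exact hne (hdisjparts _ (hεmem _) _ (hεmem _) v hv hv')
    · rename_i hi hj
      intro v hv
      exact hdisjC _ (hεmem _) v hv
    · rename_i hi hj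
      intro v hv hv'
      exact hdisjC _ (hεmem _) v hv' hv
    · rename_i hi hj
      exact absurd (Fin.ext (show (i : ℕ) = (j : ℕ) by omega)) hij
  · intro i j hij
    rw [hB]
    dsimp only
    split <;> split
    · rename_i hi hj
      have hne : ε ⟨i, hi⟩ ≠ ε ⟨j, hj⟩ := by
        intro h
        exact hij (Fin.ext (by simpa using congrArg Fin.val (hεinj h)))
      exact hpair _ (hεmem _) _ (hεmem _) hne
    · exact hadjC _ (hεmem _)
    · exact (hadjC _ (hεmem _)).symm
    · rename_i hi hj
      exact absurd (Fin.ext (show (i : ℕ) = (j : ℕ) by omega)) hij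

open scoped Classical in
/-- The invariant maintained by the decomposition. -/
structure GoodState [Fintype V] (G : SimpleGraph V) (t : ℕ) (R : Finset V)
    (parts : Finset (Finset V)) (f : V → Fin (t - 1)) (g : V → Bool) : Prop where
  cover : ∀ v : V, v ∉ R → ∃ p ∈ parts, v ∈ p
  disj : ∀ p ∈ parts, ∀ q ∈ parts, ∀ v : V, v ∈ p → v ∈ q → p = q
  partR : ∀ p ∈ parts, ∀ v ∈ p, v ∉ R
  conn : ∀ p ∈ parts, Conn G p
  deg : ∀ p ∈ parts, ∀ v ∈ p, (p.filter (fun u => G.Adj v u)).card ≤ t - 2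
  clus : ∀ p ∈ parts, ∀ v ∈ p, (mcomp G g p v).card ≤ (t - 1) / 2
  fconst : ∀ p ∈ parts, ∀ u ∈ p, ∀ v ∈ p, f u = f v
  sep : ∀ p ∈ parts, ∀ q ∈ parts, ∀ u ∈ p, ∀ v ∈ q, G.Adj u v → f u = f v → p = q
  compat : ∀ x ∈ R, ∀ p ∈ parts, ∀ q ∈ parts, p ≠ q →
    Adj2 G p (comp (G := G) R x) → Adj2 G q (comp (G := G) R x) → Adj2 G p q

end VdHW

namespace VdHW
variable {V : Type*} [DecidableEq V] [Fintype V] {G : SimpleGraph V} {t : ℕ}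

open scoped Classical in
lemma build (hminor : ¬ IsMinor (completeGraph (Fin t)) G) (ht : 4 ≤ t) :
    ∀ n : ℕ, ∀ R : Finset V, R.card ≤ n →
    ∀ parts f g, GoodState G t R parts f g →
    ∃ parts' f' g', GoodState G t (∅ : Finset V) parts' f' g' := by
  intro n
  induction n with
  | zero =>
      intro R hR parts f g hGS
      have hRe : R = ∅ := Finset.card_eq_zero.1 (by omega)
      exact hRe ▸ ⟨parts, f, g, hGS⟩
  | succ n ih =>
      intro R hR parts f g hGS
      rcases Finset.eq_empty_or_nonempty R with hRe | ⟨x, hx⟩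
      · exact hRe ▸ ⟨parts, f, g, hGS⟩
      set C := comp (G := G) R x with hCdef
      have hCsub : C ⊆ R := comp_subset
      have hCconn : Conn G C := conn_comp hx
      have hxC : x ∈ C := mem_comp_self hx
      set Qs := parts.filter (fun p => Adj2 G p C) with hQs
      have hQsparts : Qs ⊆ parts := Finset.filter_subset _ _
      have hQsadj : ∀ p ∈ Qs, Adj2 G p C := fun p hp => (Finset.mem_filter.1 hp).2
      have hQspair : ∀ p ∈ Qs, ∀ q ∈ Qs, p ≠ q → Adj2 G p q := fun p hp q hq hpq =>
        hGS.compat x hx p (hQsparts hp) q (hQsparts hq) hpq (hQsadj p hp) (hQsadj q hq)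
      have hQdisjC : ∀ p ∈ Qs, ∀ v ∈ p, v ∉ C := fun p hp v hv hvC =>
        hGS.partR p (hQsparts hp) v hv (hCsub hvC)
      have hQcard : Qs.card ≤ t - 2 :=
        card_adj_parts_le hminor ht hCconn
          (fun p hp => hGS.conn p (hQsparts hp))
          (fun p hp q hq => hGS.disj p (hQsparts hp) q (hQsparts hq))
          hQdisjC hQsadj hQspair
      -- attachment points
      set att : Finset V → V := fun p =>
        if h : ∃ a, a ∈ C ∧ ∃ u ∈ p, G.Adj u a then h.choose else x with hatt
      have hattC : ∀ p ∈ Qs, att p ∈ C ∧ ∃ u ∈ p, G.Adj u (att p) := by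
        intro p hp
        obtain ⟨u, hu, v, hv, huv⟩ := hQsadj p hp
        have hex : ∃ a, a ∈ C ∧ ∃ u ∈ p, G.Adj u a := ⟨v, hv, u, hu, huv⟩
        rw [hatt]
        dsimp only
        rw [dif_pos hex]
        exact hex.choose_spec
      set A := if Qs = ∅ then ({x} : Finset V) else Qs.image att with hAdef
      have hAC : A ⊆ C := by
        rw [hAdef]
        split
        · exact Finset.singleton_subset_iff.2 hxC
        · intro a ha
          obtain ⟨p, hp, rfl⟩ := Finset.mem_image.1 ha
          exact (hattC p hp).1
      have hAne : A.Nonempty := by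
        rw [hAdef]
        split
        · exact ⟨x, Finset.mem_singleton_self x⟩
        · rename_i h
          exact (Finset.nonempty_iff_ne_empty.2 h).image att
      have hAcard : A.card ≤ t - 2 := by
        rw [hAdef]
        split
        · rw [Finset.card_singleton]; omega
        · exact (Finset.card_image_le).trans hQcard
      obtain ⟨H, hHC, hMS⟩ := exists_minSteiner hCconn hAC
      have hHne : H.Nonempty := hAne.mono hMS.subset
      have hHR : H ⊆ R := hHC.trans hCsub
      -- degree bound for the new part
      have hdegH : ∀ v ∈ H, (H.filter (fun u => G.Adj v u)).card ≤ t - 2 := by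
        intro v hv
        refine (degree_bound H.card H A le_rfl hMS hAne v hv).trans ?_
        exact (Finset.card_erase_le).trans hAcard
      -- 2-colouring of the new part
      obtain ⟨gH, hgH, -⟩ := split_bound H.card H A le_rfl hMS hAne hHne.choose hHne.choose_spec
      have hclusH : ∀ v ∈ H, (mcomp G gH H v).card ≤ (t - 1) / 2 := by
        intro v hv
        refine (hgH v hv).trans (Nat.div_le_div_right ?_)
        omega
      -- free colour
      set pick : Finset V → V := fun p => if h : p.Nonempty then h.choose else x with hpick
      set used : Finset (Fin (t - 1)) := Qs.image (fun p => f (pick p)) with hused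
      have hfree : ∃ c : Fin (t - 1), c ∉ used := by
        by_contra hcon
        push_neg at hcon
        have huniv : (Finset.univ : Finset (Fin (t - 1))) ⊆ used := fun c _ => hcon c
        have h1 := Finset.card_le_card huniv
        rw [Finset.card_univ, Fintype.card_fin] at h1
        have h2 : used.card ≤ Qs.card := by
          rw [hused]
          exact Finset.card_image_le
        omega
      obtain ⟨c, hc⟩ := hfree
      have hpart_used : ∀ q ∈ Qs, ∀ v ∈ q, f v ∈ used := by
        intro q hq v hv
        have hqne : q.Nonempty := ⟨v, hv⟩
        have hpq : pick q ∈ q := by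
          rw [hpick]
          dsimp only
          rw [dif_pos hqne]
          exact hqne.choose_spec
        have hfc := hGS.fconst q (hQsparts hq) v hv (pick q) hpq
        rw [hused]
        exact Finset.mem_image.2 ⟨q, hq, hfc.symm⟩
      -- new state data
      set R' := R \ H with hR'
      set f' : V → Fin (t - 1) := fun v => if v ∈ H then c else f v with hf'
      set g' : V → Bool := fun v => if v ∈ H then gH v else g v with hg'
      have hR'card : R'.card ≤ n := by
        have h1 : R'.card = R.card - H.card := Finset.card_sdiff_of_subset hHR
        have h2 : 0 < H.card := Finset.card_pos.2 hHne
        omega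
      have hHolddisj : ∀ p ∈ parts, ∀ v ∈ p, v ∉ H := fun p hp v hv hvH =>
        hGS.partR p hp v hv (hHR hvH)
      have hf'old : ∀ p ∈ parts, ∀ v ∈ p, f' v = f v := by
        intro p hp v hv
        rw [hf']
        dsimp only
        rw [if_neg (hHolddisj p hp v hv)]
      have hf'H : ∀ v ∈ H, f' v = c := by
        intro v hv
        rw [hf']
        dsimp only
        rw [if_pos hv]
      have hg'old : ∀ p ∈ parts, ∀ v ∈ p, g' v = g v := by
        intro p hp v hv
        rw [hg']
        dsimp only
        rw [if_neg (hHolddisj p hp v hv)]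
      have hg'H : ∀ v ∈ H, g' v = gH v := by
        intro v hv
        rw [hg']
        dsimp only
        rw [if_pos hv]
      have hadjH : ∀ q ∈ parts, ∀ u ∈ H, ∀ v ∈ q, G.Adj u v → q ∈ Qs := by
        intro q hq u hu v hv huv
        rw [hQs]
        exact Finset.mem_filter.2 ⟨hq, v, hv, u, hHC hu, huv.symm⟩
      have hHQadj : ∀ q ∈ Qs, Adj2 G H q := by
        intro q hq
        obtain ⟨haC, u, hu, huv⟩ := hattC q hq
        have hattA : att q ∈ A := by
          rw [hAdef, if_neg (by
            intro h
            rw [h] at hq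
            exact absurd hq (Finset.notMem_empty q))]
          exact Finset.mem_image_of_mem att hq
        exact ⟨att q, hMS.subset hattA, u, hu, huv.symm⟩
      refine ih R' hR'card (insert H parts) f' g' ⟨?_, ?_, ?_, ?_, ?_, ?_, ?_, ?_, ?_⟩
      · -- cover
        intro v hv
        by_cases hvH : v ∈ H
        · exact ⟨H, Finset.mem_insert_self _ _, hvH⟩
        · have hvR : v ∉ R := by
            intro hvR
            exact hv (Finset.mem_sdiff.2 ⟨hvR, hvH⟩)
          obtain ⟨p, hp, hvp⟩ := hGS.cover v hvR
          exact ⟨p, Finset.mem_insert_of_mem hp, hvp⟩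
      · -- disj
        intro p hp q hq v hvp hvq
        rcases Finset.mem_insert.1 hp with hpH | hpold <;>
          rcases Finset.mem_insert.1 hq with hqH | hqold
        · rw [hpH, hqH]
        · exact absurd (hpH ▸ hvp) (hHolddisj q hqold v hvq)
        · exact absurd (hqH ▸ hvq) (hHolddisj p hpold v hvp)
        · exact hGS.disj p hpold q hqold v hvp hvq
      · -- partR
        intro p hp v hv
        rcases Finset.mem_insert.1 hp with hpH | hpold
        · intro hvR'
          exact (Finset.mem_sdiff.1 hvR').2 (hpH ▸ hv)
        · intro hvR'
          exact hGS.partR p hpold v hv (Finset.mem_sdiff.1 hvR').1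
      · -- conn
        intro p hp
        rcases Finset.mem_insert.1 hp with hpH | hpold
        · exact hpH ▸ hMS.conn
        · exact hGS.conn p hpold
      · -- deg
        intro p hp v hv
        rcases Finset.mem_insert.1 hp with hpH | hpold
        · subst hpH
          exact hdegH v hv
        · exact hGS.deg p hpold v hv
      · -- clus
        intro p hp v hv
        rcases Finset.mem_insert.1 hp with hpH | hpold
        · subst hpH
          rw [mcomp_congr hg'H]
          exact hclusH v hv
        · rw [mcomp_congr (hg'old p hpold)]
          exact hGS.clus p hpold v hv
      · -- fconst
        intro p hp u hu v hv
        rcases Finset.mem_insert.1 hp with hpH | hpold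
        · subst hpH
          rw [hf'H u hu, hf'H v hv]
        · rw [hf'old p hpold u hu, hf'old p hpold v hv]
          exact hGS.fconst p hpold u hu v hv
      · -- sep
        intro p hp q hq u hu v hv huv hfeq
        rcases Finset.mem_insert.1 hp with hpH | hpold <;>
          rcases Finset.mem_insert.1 hq with hqH | hqold
        · rw [hpH, hqH]
        · exfalso
          subst hpH
          have hqQs := hadjH q hqold u hu v hv huv
          rw [hf'H u hu, hf'old q hqold v hv] at hfeq
          exact hc (hfeq ▸ hpart_used q hqQs v hv)
        · exfalso
          subst hqH
          have hpQs := hadjH p hpold v hv u hu huv.symm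
          rw [hf'old p hpold u hu, hf'H v hv] at hfeq
          exact hc (hfeq ▸ hpart_used p hpQs u hu)
        · rw [hf'old p hpold u hu, hf'old q hqold v hv] at hfeq
          exact hGS.sep p hpold q hqold u hu v hv huv hfeq
      · -- compat
        intro x' hx' p hp q hq hpq hpC' hqC'
        have hx'R : x' ∈ R := (Finset.mem_sdiff.1 hx').1
        by_cases hx'C : x' ∈ C
        · have hC'sub : comp (G := G) R' x' ⊆ C := by
            intro z hz
            obtain ⟨hzR', hrr⟩ := mem_comp.1 hz
            have hrrR : RR G R x' z := hrr.mono Finset.sdiff_subset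
            have heq : comp (G := G) R x' = C := by
              rw [hCdef]
              exact comp_eq_of_mem (hCdef ▸ hx'C)
            exact heq ▸ mem_comp.2 ⟨(Finset.mem_sdiff.1 hzR').1, hrrR⟩
          have hmemQs : ∀ r ∈ parts, Adj2 G r (comp (G := G) R' x') → r ∈ Qs := by
            intro r hr hradj
            rw [hQs]
            exact Finset.mem_filter.2 ⟨hr, hradj.mono_right hC'sub⟩
          rcases Finset.mem_insert.1 hp with hpH | hpold <;>
            rcases Finset.mem_insert.1 hq with hqH | hqold
          · exact absurd (hpH.trans hqH.symm) hpq
          · subst hpH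
            exact hHQadj q (hmemQs q hqold hqC')
          · subst hqH
            exact (hHQadj p (hmemQs p hpold hpC')).symm
          · exact hQspair p (hmemQs p hpold hpC') q (hmemQs q hqold hqC')
              (by intro h; exact hpq h)
        · -- old component is untouched
          have hdisjC' : ∀ z ∈ comp (G := G) R x', z ∉ C := by
            intro z hz hzC
            have e1 := comp_eq_of_mem (G := G) hz
            have e2 := comp_eq_of_mem (G := G) (hCdef ▸ hzC : z ∈ comp (G := G) R x)
            apply hx'C
            rw [hCdef, ← e2, e1]
            exact mem_comp_self hx'R
          have hsub2 : comp (G := G) R x' ⊆ R' := by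
            intro u hu
            refine Finset.mem_sdiff.2 ⟨(mem_comp.1 hu).1, fun huH => ?_⟩
            exact hdisjC' u hu (hHC huH)
          have hcompeq : comp (G := G) R' x' = comp (G := G) R x' := by
            apply Finset.Subset.antisymm
            · intro z hz
              obtain ⟨hzR', hrr⟩ := mem_comp.1 hz
              exact mem_comp.2 ⟨(Finset.mem_sdiff.1 hzR').1, hrr.mono Finset.sdiff_subset⟩
            · intro z hz
              obtain ⟨hzR, hrr⟩ := mem_comp.1 hz
              have hrr2 : RR G (comp (G := G) R x') x' z := RR_comp hx'R hrr
              exact mem_comp.2 ⟨hsub2 hz, hrr2.mono hsub2⟩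
          have hHnotadj : ¬ Adj2 G H (comp (G := G) R' x') := by
            rintro ⟨u, hu, v, hv, huv⟩
            rw [hcompeq] at hv
            have hvR : v ∈ R := (mem_comp.1 hv).1
            have hvC : v ∈ C := by
              rw [hCdef]
              exact comp_closed (hCdef ▸ hHC hu) hvR huv
            exact hdisjC' v hv hvC
          rcases Finset.mem_insert.1 hp with hpH | hpold <;>
            rcases Finset.mem_insert.1 hq with hqH | hqold
          · exact absurd (hpH.trans hqH.symm) hpq
          · exact absurd (hpH ▸ hpC') hHnotadj
          · exact absurd (hqH ▸ hqC') hHnotadj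
          · rw [hcompeq] at hpC' hqC'
            exact hGS.compat x' hx'R p hpold q hqold hpq hpC' hqC'
end VdHW

namespace VdHW
variable {V : Type*} [DecidableEq V] [Fintype V] {G : SimpleGraph V} {t : ℕ}

lemma main (hminor : ¬ IsMinor (completeGraph (Fin t)) G) (ht : 4 ≤ t) :
    (∃ f : V → Fin (t - 1), HasDefect G f (t - 2)) ∧
    (∃ f : V → Fin (2 * t - 2), HasClustering G f ((t - 1) / 2)) := by
  have htpos : 0 < t - 1 := by omega
  have hGS0 : GoodState G t Finset.univ (∅ : Finset (Finset V))
      (fun _ => ⟨0, htpos⟩) (fun _ => false) := by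
    refine ⟨?_, ?_, ?_, ?_, ?_, ?_, ?_, ?_, ?_⟩
    · exact fun v hv => absurd (Finset.mem_univ v) hv
    · exact fun p hp => absurd hp (Finset.notMem_empty p)
    · exact fun p hp => absurd hp (Finset.notMem_empty p)
    · exact fun p hp => absurd hp (Finset.notMem_empty p)
    · exact fun p hp => absurd hp (Finset.notMem_empty p)
    · exact fun p hp => absurd hp (Finset.notMem_empty p)
    · exact fun p hp => absurd hp (Finset.notMem_empty p)
    · exact fun p hp => absurd hp (Finset.notMem_empty p)
    · exact fun x hx p hp => absurd hp (Finset.notMem_empty p)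
  obtain ⟨parts, f, g, hGS⟩ :=
    build hminor ht Finset.univ.card Finset.univ le_rfl _ _ _ hGS0
  constructor
  · refine ⟨f, fun v => ?_⟩
    obtain ⟨p, hp, hvp⟩ := hGS.cover v (Finset.notMem_empty v)
    classical
    have hsub : {u | G.Adj v u ∧ f u = f v} ⊆ ↑(p.filter (fun u => G.Adj v u)) := by
      rintro u ⟨hadj, hfu⟩
      obtain ⟨q, hq, huq⟩ := hGS.cover u (Finset.notMem_empty u)
      have hqp := hGS.sep q hq p hp u huq v hvp hadj.symm hfu
      subst hqp
      exact Finset.mem_coe.2 (Finset.mem_filter.2 ⟨huq, hadj⟩)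
    calc {u | G.Adj v u ∧ f u = f v}.ncard
        ≤ (↑(p.filter (fun u => G.Adj v u)) : Set V).ncard :=
          Set.ncard_le_ncard hsub (Finset.finite_toSet _)
      _ = (p.filter (fun u => G.Adj v u)).card := Set.ncard_coe_finset _
      _ ≤ t - 2 := by
          have := hGS.deg p hp v hvp
          convert this using 2
  · have hcard : Fintype.card (Fin (t - 1) × Bool) = 2 * t - 2 := by
      rw [Fintype.card_prod, Fintype.card_fin, Fintype.card_bool]
      omega
    set e := Fintype.equivFinOfCardEq hcard with he
    refine ⟨fun v => e (f v, g v), fun v => ?_⟩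
    obtain ⟨p, hp, hvp⟩ := hGS.cover v (Finset.notMem_empty v)
    have key : ∀ u, Relation.ReflTransGen (monoSubgraph G (fun v => e (f v, g v))).Adj v u →
        u ∈ mcomp G g p v := by
      intro u h
      induction h with
      | refl => exact mem_mcomp_self hvp
      | @tail b u hvb hbu ih =>
          obtain ⟨hadj, hfeq⟩ : G.Adj b u ∧ e (f b, g b) = e (f u, g u) := hbu
          have hpair : (f b, g b) = (f u, g u) := e.injective hfeq
          have hfb : f b = f u := congrArg Prod.fst hpair
          have hgb : g b = g u := congrArg Prod.snd hpair
          have hbp : b ∈ p := mcomp_subset ih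
          obtain ⟨q, hq, huq⟩ := hGS.cover u (Finset.notMem_empty u)
          have hpq := hGS.sep p hp q hq b hbp u huq hadj hfb
          have hup : u ∈ p := hpq ▸ huq
          exact mem_mcomp.2 ⟨hup, (mem_mcomp.1 ih).2.tail ⟨hadj, hbp, hup, hgb⟩⟩
    have hsub : {u | (monoSubgraph G (fun v => e (f v, g v))).Reachable v u} ⊆
        ↑(mcomp G g p v) := by
      intro u hu
      exact Finset.mem_coe.2 (key u ((SimpleGraph.reachable_iff_reflTransGen _ _).1 hu))
    calc {u | (monoSubgraph G (fun v => e (f v, g v))).Reachable v u}.ncard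
        ≤ (↑(mcomp G g p v) : Set V).ncard := Set.ncard_le_ncard hsub (Finset.finite_toSet _)
      _ = (mcomp G g p v).card := Set.ncard_coe_finset _
      _ ≤ (t - 1) / 2 := hGS.clus p hp v hvp
end VdHW


end VdHWProof

/-- **Theorem 47 (vdHW).** For `t ≥ 4`, every graph with no `K_t` minor is
`(t-1)`-colourable with defect `t-2`, and is `(2t-2)`-colourable with
clustering `⌈(t-2)/2⌉`. -/
theorem stmt16 [Fintype V] (G : SimpleGraph V) (t : ℕ) (ht : 4 ≤ t)
    (hminor : ¬ IsMinor (completeGraph (Fin t)) G) :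
    (∃ f : V → Fin (t - 1), HasDefect G f (t - 2)) ∧
    (∃ f : V → Fin (2 * t - 2), HasClustering G f ((t - 1) / 2)) := by
  classical
  exact VdHW.main hminor ht
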